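/- Fix N users each with m feature vectors z_{u,1},…,z_{u,m} ∈ ℝ^d satisfying ‖z_{u,i}‖₂ ≤ B and the average correlation condition (1/(m(m−1))) Σ_{i≠j} z_{u,i}ᵀ z_{u,j} ≤ ρB² for some ρ ∈ [0,1]. Let σ_u be i.i.d. Rademacher variables, one per user, and Z̄_u = Σ_{i=1}^m z_{u,i}. Then E_σ[‖Σ_u σ_u Z̄_u‖₂] ≤ √(NmB²(1+(m−1)ρ)), and hence the block-dependent Rademacher complexity (WB/(mN))·E_σ[‖Σ_u σ_u Z̄_u‖₂] is at most (WB/√(mN))·√(1+(m−1)ρ). -/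

import Mathlib

/-!
Signs attached to distinct users are orthogonal, so the second moment of `Σ_u σ_u Z̄_u` is
`Σ_u ‖Z̄_u‖²`, and Jensen (Cauchy–Schwarz over the `2^N` sign patterns) bounds the first moment
by its square root. Within a block, `‖Z̄_u‖² = Σ_i ‖z_{u,i}‖² + Σ_{i≠j} ⟪z_{u,i}, z_{u,j}⟫
≤ mB² + m(m-1)ρB²`.
-/

open Finset

noncomputable def rademacher (b : Bool) : ℝ := if b then 1 else -1

@[simp] lemma rademacher_mul_self (b : Bool) : rademacher b * rademacher b = 1 := by
  cases b <;> norm_num [rademacher]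

@[simp] lemma rademacher_not (b : Bool) : rademacher (!b) = -rademacher b := by
  cases b <;> simp [rademacher]

section Rademacher

variable {ι : Type*} [Fintype ι] [DecidableEq ι]

lemma sum_rademacher_mul_rademacher (u v : ι) :
    ∑ ε : ι → Bool, rademacher (ε u) * rademacher (ε v)
      = if u = v then 2 ^ Fintype.card ι else 0 := by
  split_ifs with huv
  · subst huv
    simp
  -- flipping the sign at `u` changes the sign of every summand
  have hflip : Function.Involutive fun ε : ι → Bool => Function.update ε u !(ε u) :=
    fun ε => by simp
  have hneg : ∀ ε : ι → Bool, rademacher (hflip.toPerm _ ε u) * rademacher (hflip.toPerm _ ε v)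
      = -(rademacher (ε u) * rademacher (ε v)) := fun ε => by
    simp [Function.update_of_ne (Ne.symm huv)]
  have := Equiv.sum_comp (hflip.toPerm _) fun ε => rademacher (ε u) * rademacher (ε v)
  simp only [hneg, sum_neg_distrib] at this
  linarith

variable {E : Type*} [NormedAddCommGroup E] [InnerProductSpace ℝ E]

lemma sum_norm_sum_rademacher_smul_sq (x : ι → E) :
    ∑ ε : ι → Bool, ‖∑ u, rademacher (ε u) • x u‖ ^ 2 = 2 ^ Fintype.card ι * ∑ u, ‖x u‖ ^ 2 := by
  calc ∑ ε : ι → Bool, ‖∑ u, rademacher (ε u) • x u‖ ^ 2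
      = ∑ u, ∑ v, (∑ ε : ι → Bool, rademacher (ε u) * rademacher (ε v)) * inner ℝ (x u) (x v) := by
        simp_rw [← real_inner_self_eq_norm_sq, sum_inner, inner_sum, real_inner_smul_left,
          real_inner_smul_right, sum_mul]
        rw [sum_comm]
        refine sum_congr rfl fun u _ => ?_
        rw [sum_comm]
        simp only [mul_assoc]
    _ = 2 ^ Fintype.card ι * ∑ u, ‖x u‖ ^ 2 := by
        simp [sum_rademacher_mul_rademacher, mul_sum]

lemma sum_norm_sum_rademacher_smul_le (x : ι → E) :
    (∑ ε : ι → Bool, ‖∑ u, rademacher (ε u) • x u‖) / 2 ^ Fintype.card ι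
      ≤ √(∑ u, ‖x u‖ ^ 2) := by
  apply Real.le_sqrt_of_sq_le
  have hcs := sq_sum_le_card_mul_sum_sq (s := univ)
    (f := fun ε : ι → Bool => ‖∑ u, rademacher (ε u) • x u‖)
  rw [sum_norm_sum_rademacher_smul_sq, card_univ, Fintype.card_fun, Fintype.card_bool] at hcs
  rw [div_pow, div_le_iff₀ (by positivity)]
  push_cast at hcs
  linarith

end Rademacher

section Block

variable {ι E : Type*} [Fintype ι] [DecidableEq ι] [NormedAddCommGroup E] [InnerProductSpace ℝ E]

lemma norm_sum_sq_eq_sum_norm_sq_add_sum_offDiag (z : ι → E) :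
    ‖∑ i, z i‖ ^ 2
      = ∑ i, ‖z i‖ ^ 2 + ∑ i, ∑ j ∈ univ.filter (fun j => j ≠ i), inner ℝ (z i) (z j) := by
  rw [← real_inner_self_eq_norm_sq, sum_inner, ← sum_add_distrib]
  refine sum_congr rfl fun i _ => ?_
  rw [inner_sum, ← sum_filter_add_sum_filter_not univ (fun j => j = i), filter_eq',
    if_pos (mem_univ i), sum_singleton, real_inner_self_eq_norm_sq]

lemma sum_offDiag_inner_le {ρ B : ℝ} (z : ι → E)
    (hcorr : (1 / ((Fintype.card ι : ℝ) * ((Fintype.card ι : ℝ) - 1))) *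
        ∑ i, ∑ j ∈ univ.filter (fun j => j ≠ i), inner ℝ (z i) (z j) ≤ ρ * B ^ 2) :
    ∑ i, ∑ j ∈ univ.filter (fun j => j ≠ i), inner ℝ (z i) (z j)
      ≤ Fintype.card ι * ((Fintype.card ι : ℝ) - 1) * ρ * B ^ 2 := by
  set m := Fintype.card ι
  by_cases hm : m ≤ 1
  · have : Subsingleton ι := Fintype.card_le_one_iff_subsingleton.1 hm
    have hempty : ∀ i : ι, univ.filter (fun j => j ≠ i) = ∅ := fun i =>
      filter_eq_empty_iff.2 fun j _ => not_not.2 (Subsingleton.elim j i)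
    have hm' : (m : ℝ) * (m - 1) = 0 := by interval_cases m <;> norm_num
    simp [hempty, hm']
  · have hm2 : (2 : ℝ) ≤ m := by exact_mod_cast (not_le.1 hm)
    rw [one_div, inv_mul_le_iff₀ (by nlinarith)] at hcorr
    linarith

lemma norm_sum_sq_le_of_sum_offDiag_inner_le {ρ B : ℝ} (z : ι → E) (hz : ∀ i, ‖z i‖ ≤ B)
    (hcorr : (1 / ((Fintype.card ι : ℝ) * ((Fintype.card ι : ℝ) - 1))) *
        ∑ i, ∑ j ∈ univ.filter (fun j => j ≠ i), inner ℝ (z i) (z j) ≤ ρ * B ^ 2) :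
    ‖∑ i, z i‖ ^ 2 ≤ Fintype.card ι * B ^ 2 * (1 + ((Fintype.card ι : ℝ) - 1) * ρ) := by
  have hdiag : ∑ i, ‖z i‖ ^ 2 ≤ Fintype.card ι * B ^ 2 := by
    simpa using sum_le_sum fun i (_ : i ∈ univ) => pow_le_pow_left₀ (norm_nonneg _) (hz i) 2
  rw [norm_sum_sq_eq_sum_norm_sq_add_sum_offDiag]
  linarith [sum_offDiag_inner_le z hcorr]

end Block

lemma div_mul_sqrt_mul_sq_mul {a b : ℝ} (ha : 0 < a) (hb : 0 ≤ b) (x c : ℝ) :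
    x / a * √(a * b ^ 2 * c) = x * b / √a * √c := by
  have hsa : 0 < √a := Real.sqrt_pos.2 ha
  rw [Real.sqrt_mul (by positivity), Real.sqrt_mul ha.le, Real.sqrt_sq hb]
  nth_rw 1 [← Real.mul_self_sqrt ha.le]
  field_simp

theorem block_dependent_rademacher_bound_general
    (N m d : ℕ) (B W ρ : ℝ) (hW : 0 < W)
    (z : Fin N → Fin m → EuclideanSpace ℝ (Fin d))
    (hz : ∀ u i, ‖z u i‖ ≤ B)
    (hcorr : ∀ u, (1 / ((m : ℝ) * ((m : ℝ) - 1))) *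
        ∑ i : Fin m, ∑ j ∈ Finset.univ.filter (fun j => j ≠ i),
          inner ℝ (z u i) (z u j) ≤ ρ * B ^ 2) :
    ((∑ ε : Fin N → Bool,
        ‖∑ u : Fin N, (if ε u then (1 : ℝ) else -1) • ∑ i : Fin m, z u i‖)
      / (2 : ℝ) ^ N ≤ Real.sqrt ((N : ℝ) * m * B ^ 2 * (1 + ((m : ℝ) - 1) * ρ))) ∧
    ((W / ((m : ℝ) * N)) *
        ((∑ ε : Fin N → Bool,
            ‖∑ u : Fin N, (if ε u then (1 : ℝ) else -1) • ∑ i : Fin m, z u i‖)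
          / (2 : ℝ) ^ N)
      ≤ (W * B / Real.sqrt ((m : ℝ) * N)) * Real.sqrt (1 + ((m : ℝ) - 1) * ρ)) := by
  have hblock (u : Fin N) : ‖∑ i, z u i‖ ^ 2 ≤ m * B ^ 2 * (1 + ((m : ℝ) - 1) * ρ) := by
    simpa using norm_sum_sq_le_of_sum_offDiag_inner_le (z u) (hz u) (by simpa using hcorr u)
  have hmean : (∑ ε : Fin N → Bool, ‖∑ u, rademacher (ε u) • ∑ i, z u i‖) / 2 ^ N
      ≤ √(N * m * B ^ 2 * (1 + ((m : ℝ) - 1) * ρ)) :=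
    calc _ ≤ √(∑ u, ‖∑ i, z u i‖ ^ 2) := by
          simpa using sum_norm_sum_rademacher_smul_le fun u => ∑ i, z u i
      _ ≤ √(N * (m * B ^ 2 * (1 + ((m : ℝ) - 1) * ρ))) :=
          Real.sqrt_le_sqrt (by simpa using sum_le_sum fun u (_ : u ∈ univ) => hblock u)
      _ = _ := by ring_nf
  refine ⟨hmean, ?_⟩
  rcases (show (0 : ℝ) ≤ m * N by positivity).eq_or_lt with hmN | hmN
  · simp [← hmN]
  have hm : 0 < m := Nat.pos_of_ne_zero fun h => by simp [h] at hmN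
  have hN : 0 < N := Nat.pos_of_ne_zero fun h => by simp [h] at hmN
  have hB : 0 ≤ B := (norm_nonneg _).trans (hz ⟨0, hN⟩ ⟨0, hm⟩)
  calc _ ≤ W / (m * N) * √(N * m * B ^ 2 * (1 + ((m : ℝ) - 1) * ρ)) := by gcongr; exact hmean
    _ = _ := by rw [mul_comm (N : ℝ) m, div_mul_sqrt_mul_sq_mul hmN hB]

/-- Block-dependent Rademacher bound: with one Rademacher sign per user and
block vectors of norm at most `B` whose average pairwise inner product within each block
is at most `ρB²`, we have `E_σ ‖Σ_u σ_u Z̄_u‖ ≤ √(NmB²(1+(m-1)ρ))`, and hence the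
block-dependent Rademacher complexity `(WB/(mN)) E_σ ‖Σ_u σ_u Z̄_u‖` (with the `W`-scaled
supremum) is at most `(WB/√(mN))·√(1+(m-1)ρ)`. -/
theorem block_dependent_rademacher_bound
    (N m d : ℕ) (B W ρ : ℝ) (hW : 0 < W) (hρ0 : 0 ≤ ρ) (hρ1 : ρ ≤ 1)
    (z : Fin N → Fin m → EuclideanSpace ℝ (Fin d))
    (hz : ∀ u i, ‖z u i‖ ≤ B)
    (hcorr : ∀ u, (1 / ((m : ℝ) * ((m : ℝ) - 1))) *
        ∑ i : Fin m, ∑ j ∈ Finset.univ.filter (fun j => j ≠ i),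
          inner ℝ (z u i) (z u j) ≤ ρ * B ^ 2) :
    ((∑ ε : Fin N → Bool,
        ‖∑ u : Fin N, (if ε u then (1 : ℝ) else -1) • ∑ i : Fin m, z u i‖)
      / (2 : ℝ) ^ N ≤ Real.sqrt ((N : ℝ) * m * B ^ 2 * (1 + ((m : ℝ) - 1) * ρ))) ∧
    ((W / ((m : ℝ) * N)) *
        ((∑ ε : Fin N → Bool,
            ‖∑ u : Fin N, (if ε u then (1 : ℝ) else -1) • ∑ i : Fin m, z u i‖)
          / (2 : ℝ) ^ N)
      ≤ (W * B / Real.sqrt ((m : ℝ) * N)) * Real.sqrt (1 + ((m : ℝ) - 1) * ρ)) :=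
  block_dependent_rademacher_bound_general N m d B W ρ hW z hz hcorr
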